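/- arXiv:1304.1864 — 4 statements merged into one kernel-verified Lean document; each statement's English description precedes it below -/
import Mathlib

section
/- If T is a real symmetric n×n matrix, ẑ a unit vector, and λ̂ = ẑ*Tẑ the Rayleigh quotient, then with r = Tẑ − λ̂ẑ and z a unit eigenvector for the eigenvalue λ nearest to λ̂ (assumed strictly nearest), one has ‖r‖ / spdiam(T) ≤ sin∠(ẑ, z), where spdiam(T) = λ_max − λ_min. -/
open scoped RealInnerProductSpace

/-!
The Rayleigh quotient `λ̂` minimises `‖Tẑ - μẑ‖` over `μ` (Pythagoras), so `‖r‖ ≤ ‖(T - λ)ẑ‖`.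
Since `(T - λ)z = 0`, this equals `‖(T - λ)w‖` for the component `w = ẑ - ⟨ẑ, z⟩z` of `ẑ`
orthogonal to `z`, whose norm is `sin∠(ẑ, z)`. As `λ` lies in the spectral interval, every
eigenvalue of the symmetric map `T - λ` has modulus at most `spdiam(T)`, which bounds its norm.
-/

open Module.End

section

variable {E : Type*} [NormedAddCommGroup E] [InnerProductSpace ℝ E]

theorem norm_sub_inner_smul_le_norm_sub_smul {x : E} (hx : ‖x‖ = 1) (y : E) (μ : ℝ) :
    ‖y - ⟪x, y⟫ • x‖ ≤ ‖y - μ • x‖ := by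
  have hpyth : ‖y - μ • x‖ ^ 2 = ‖y - ⟪x, y⟫ • x‖ ^ 2 + (⟪x, y⟫ - μ) ^ 2 := by
    simp only [norm_sub_sq_real, norm_smul, real_inner_smul_right, real_inner_comm x y,
      Real.norm_eq_abs, mul_pow, sq_abs, hx]
    ring
  refine (pow_le_pow_iff_left₀ (norm_nonneg _) (norm_nonneg _) two_ne_zero).mp ?_
  rw [hpyth]
  exact le_add_of_nonneg_right (sq_nonneg _)

theorem LinearMap.IsSymmetric.norm_apply_sub_smul_le [FiniteDimensional ℝ E]
    {A : E →ₗ[ℝ] E} (hA : A.IsSymmetric) {μ C : ℝ} (hC : ∀ ν, HasEigenvalue A ν → |ν - μ| ≤ C)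
    (v : E) : ‖A v - μ • v‖ ≤ C * ‖v‖ := by
  rcases eq_or_ne v 0 with rfl | hv
  · simp
  have : Nontrivial E := ⟨⟨v, 0, hv⟩⟩
  have hC0 : 0 ≤ C := (abs_nonneg _).trans (hC _ hA.hasEigenvalue_iSup_of_finiteDimensional)
  let b := hA.eigenvectorBasis rfl
  have hrepr (i) : b.repr (A v - μ • v) i = (hA.eigenvalues rfl i - μ) * b.repr v i := by
    simp only [map_sub, map_smul, PiLp.sub_apply, PiLp.smul_apply, smul_eq_mul,
      hA.eigenvectorBasis_apply_self_apply, RCLike.ofReal_real_eq_id, id_eq, b]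
    ring
  have hsq : ‖A v - μ • v‖ ^ 2 ≤ (C * ‖v‖) ^ 2 := by
    rw [← b.repr.norm_map, ← b.repr.norm_map v, mul_pow, EuclideanSpace.norm_sq_eq,
      EuclideanSpace.norm_sq_eq, Finset.mul_sum]
    refine Finset.sum_le_sum fun i _ => ?_
    rw [hrepr, norm_mul, mul_pow]
    gcongr
    rw [Real.norm_eq_abs]
    exact hC _ (hA.hasEigenvalue_eigenvalues rfl i)
  exact (pow_le_pow_iff_left₀ (norm_nonneg _) (by positivity) two_ne_zero).mp hsq

end

theorem residual_div_spdiam_le_sin_angle_general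
    (n : ℕ) (T : Matrix (Fin n) (Fin n) ℝ) (hT : T.IsSymm)
    (zhat z : EuclideanSpace ℝ (Fin n))
    (hzhat : ‖zhat‖ = 1) (hz : ‖z‖ = 1)
    (lam lammin lammax : ℝ)
    (heig : Matrix.toEuclideanLin T z = lam • z)
    (hbounds : ∀ μ : ℝ, (∃ v : EuclideanSpace ℝ (Fin n), v ≠ 0 ∧ Matrix.toEuclideanLin T v = μ • v) →
      lammin ≤ μ ∧ μ ≤ lammax)
    (lamhat : ℝ) (hray : lamhat = ⟪zhat, (Matrix.toEuclideanLin T zhat : EuclideanSpace ℝ (Fin n))⟫)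
    (r : EuclideanSpace ℝ (Fin n)) (hr : r = (Matrix.toEuclideanLin T zhat : EuclideanSpace ℝ (Fin n)) - lamhat • zhat) :
    ‖r‖ / (lammax - lammin) ≤ ‖zhat - ⟪zhat, z⟫ • z‖ := by
  set A := Matrix.toEuclideanLin T
  set w := zhat - ⟪zhat, z⟫ • z
  have hA : A.IsSymmetric := Matrix.isSymmetric_toEuclideanLin_iff.mpr <| by
    rwa [Matrix.IsHermitian, Matrix.conjTranspose_eq_transpose_of_trivial]
  have hspec (ν : ℝ) (hν : HasEigenvalue A ν) : lammin ≤ ν ∧ ν ≤ lammax :=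
    let ⟨v, hv⟩ := hν.exists_hasEigenvector
    hbounds ν ⟨v, hv.2, mem_eigenspace_iff.mp hv.1⟩
  have hlam := hbounds lam ⟨z, norm_ne_zero_iff.mp (hz ▸ one_ne_zero), heig⟩
  rcases le_or_gt (lammax - lammin) 0 with hD | hD
  · exact (div_nonpos_of_nonneg_of_nonpos (norm_nonneg r) hD).trans (norm_nonneg w)
  have hw : A w - lam • w = A zhat - lam • zhat := by
    simp only [w, map_sub, map_smul, heig, smul_sub, smul_comm lam]
    abel
  rw [div_le_iff₀ hD, mul_comm]
  calc ‖r‖ ≤ ‖A zhat - lam • zhat‖ := by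
        rw [hr, hray]; exact norm_sub_inner_smul_le_norm_sub_smul hzhat _ lam
    _ = ‖A w - lam • w‖ := by rw [hw]
    _ ≤ (lammax - lammin) * ‖w‖ := hA.norm_apply_sub_smul_le (fun ν hν =>
        abs_le.mpr ⟨by linarith [hspec ν hν], by linarith [hspec ν hν]⟩) w

/-- Gap Theorem, second part (lower bound): with the Rayleigh quotient
`λ̂ = ⟨ẑ, Tẑ⟩`, one has `‖r‖ / spdiam(T) ≤ sin∠(ẑ, z)`. -/
theorem residual_div_spdiam_le_sin_angle
    (n : ℕ) (T : Matrix (Fin n) (Fin n) ℝ) (hT : T.IsSymm)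
    (zhat z : EuclideanSpace ℝ (Fin n))
    (hzhat : ‖zhat‖ = 1) (hz : ‖z‖ = 1)
    (lam lammin lammax : ℝ)
    (heig : Matrix.toEuclideanLin T z = lam • z)
    (hmin : ∃ v : EuclideanSpace ℝ (Fin n), v ≠ 0 ∧ Matrix.toEuclideanLin T v = lammin • v)
    (hmax : ∃ v : EuclideanSpace ℝ (Fin n), v ≠ 0 ∧ Matrix.toEuclideanLin T v = lammax • v)
    (hbounds : ∀ μ : ℝ, (∃ v : EuclideanSpace ℝ (Fin n), v ≠ 0 ∧ Matrix.toEuclideanLin T v = μ • v) →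
      lammin ≤ μ ∧ μ ≤ lammax)
    (lamhat : ℝ) (hray : lamhat = ⟪zhat, (Matrix.toEuclideanLin T zhat : EuclideanSpace ℝ (Fin n))⟫)
    (hclosest : ∀ μ : ℝ, (∃ v : EuclideanSpace ℝ (Fin n), v ≠ 0 ∧ Matrix.toEuclideanLin T v = μ • v) →
      μ ≠ lam → |lamhat - lam| < |lamhat - μ|)
    (r : EuclideanSpace ℝ (Fin n)) (hr : r = (Matrix.toEuclideanLin T zhat : EuclideanSpace ℝ (Fin n)) - lamhat • zhat) :
    ‖r‖ / (lammax - lammin) ≤ ‖zhat - ⟪zhat, z⟫ • z‖ :=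
  residual_div_spdiam_le_sin_angle_general n T hT zhat z hzhat hz lam lammin lammax heig hbounds
    lamhat hray r hr
end

section
/- If T is a real symmetric matrix, ẑ a unit vector with Rayleigh quotient λ̂ = ẑ*Tẑ, r = Tẑ − λ̂ẑ, and λ is the eigenvalue of T closest to λ̂ (with λ̂ strictly closer to λ than to any other eigenvalue), then |λ̂ − λ| ≤ min{ ‖r‖, ‖r‖² / gap(λ̂) }, where gap(λ̂) is the distance from λ̂ to the nearest eigenvalue different from λ. -/
/-!
Expand `ẑ` in an orthonormal eigenbasis `(bᵢ, μᵢ)` of `T`, with weights `cᵢ = ⟪bᵢ, ẑ⟫`,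
`∑ cᵢ² = 1`. Then `‖r‖² = ∑ (μᵢ - λ̂)² cᵢ² ≥ (λ̂ - λ)²`. Since `r ⊥ ẑ`, also
`‖r‖² = ⟪r, Tẑ - λẑ⟫ = ∑ (μᵢ - λ̂)(μᵢ - λ) cᵢ²`. For `μᵢ ≠ λ`, `λ̂` lies on `λ`'s side of the
midpoint of `λ` and `μᵢ`, so both factors have the same sign and the term is at least
`gap · |μᵢ - λ| cᵢ²`; summing gives `‖r‖² ≥ gap · |∑ (μᵢ - λ) cᵢ²| = gap · |λ̂ - λ|`.
-/

open scoped RealInnerProductSpace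

theorem gap_mul_abs_sub_le_mul_sub {s l m g : ℝ} (hcl : |s - l| ≤ |s - m|) (hg : g ≤ |s - m|) :
    g * |m - l| ≤ (m - s) * (m - l) := by
  have hcross : |(m - s) * (s - l)| ≤ (m - s) ^ 2 := by
    rw [abs_mul, sq, ← abs_mul_abs_self, abs_sub_comm m s]
    exact mul_le_mul_of_nonneg_left hcl (abs_nonneg _)
  have hsign : 0 ≤ (m - s) * (m - l) := by
    nlinarith [neg_abs_le ((m - s) * (s - l))]
  calc g * |m - l| ≤ |m - s| * |m - l| := by
        rw [abs_sub_comm m s]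
        exact mul_le_mul_of_nonneg_right hg (abs_nonneg _)
    _ = (m - s) * (m - l) := by rw [← abs_mul, abs_of_nonneg hsign]

section

variable {E : Type*} [NormedAddCommGroup E] [InnerProductSpace ℝ E]

theorem inner_sub_rayleigh_smul_eq_zero (A : E →ₗ[ℝ] E) {z : E} (hz : ‖z‖ = 1) :
    ⟪z, A z - ⟪z, A z⟫ • z⟫ = 0 := by
  rw [inner_sub_right, real_inner_smul_right, real_inner_self_eq_norm_sq, hz]
  ring

variable [FiniteDimensional ℝ E] {A : E →ₗ[ℝ] E} {n : ℕ}

namespace LinearMap.IsSymmetric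

theorem inner_eigenvectorBasis_sub_smul (hA : A.IsSymmetric) (hn : Module.finrank ℝ E = n)
    (x : E) (t : ℝ) (i : Fin n) :
    ⟪hA.eigenvectorBasis hn i, A x - t • x⟫ =
      (hA.eigenvalues hn i - t) * ⟪hA.eigenvectorBasis hn i, x⟫ := by
  rw [inner_sub_right, real_inner_smul_right, ← hA, hA.apply_eigenvectorBasis,
    real_inner_smul_left, sub_mul]
  rfl

theorem inner_sub_smul_eq_sum (hA : A.IsSymmetric) (hn : Module.finrank ℝ E = n)
    (x : E) (t : ℝ) :
    ⟪x, A x - t • x⟫ =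
      ∑ i, (hA.eigenvalues hn i - t) * ⟪hA.eigenvectorBasis hn i, x⟫ ^ 2 := by
  rw [← (hA.eigenvectorBasis hn).sum_inner_mul_inner]
  refine Finset.sum_congr rfl fun i _ => ?_
  rw [hA.inner_eigenvectorBasis_sub_smul, real_inner_comm]
  ring

theorem inner_sub_smul_sub_smul_eq_sum (hA : A.IsSymmetric) (hn : Module.finrank ℝ E = n)
    (x : E) (s t : ℝ) :
    ⟪A x - s • x, A x - t • x⟫ =
      ∑ i, (hA.eigenvalues hn i - s) * (hA.eigenvalues hn i - t) *
        ⟪hA.eigenvectorBasis hn i, x⟫ ^ 2 := by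
  rw [← (hA.eigenvectorBasis hn).sum_inner_mul_inner]
  refine Finset.sum_congr rfl fun i _ => ?_
  rw [hA.inner_eigenvectorBasis_sub_smul, real_inner_comm, hA.inner_eigenvectorBasis_sub_smul]
  ring

theorem mul_norm_le_norm_sub_smul (hA : A.IsSymmetric) {d s : ℝ} (hd : 0 ≤ d)
    (hspec : ∀ μ, Module.End.HasEigenvalue A μ → d ≤ |s - μ|) (z : E) :
    d * ‖z‖ ≤ ‖A z - s • z‖ := by
  have hn : Module.finrank ℝ E = Module.finrank ℝ E := rfl
  set b := hA.eigenvectorBasis hn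
  set μ := hA.eigenvalues hn
  suffices (d * ‖z‖) ^ 2 ≤ ‖A z - s • z‖ ^ 2 from
    (pow_le_pow_iff_left₀ (by positivity) (norm_nonneg _) two_ne_zero).1 this
  calc (d * ‖z‖) ^ 2 = ∑ i, d ^ 2 * ⟪b i, z⟫ ^ 2 := by
        rw [← Finset.mul_sum, b.sum_sq_inner_right, mul_pow]
    _ ≤ ∑ i, (μ i - s) * (μ i - s) * ⟪b i, z⟫ ^ 2 := by
        refine Finset.sum_le_sum fun i _ => mul_le_mul_of_nonneg_right ?_ (sq_nonneg _)
        rw [← abs_mul_abs_self, abs_sub_comm, sq]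
        exact mul_self_le_mul_self hd (hspec _ (hA.hasEigenvalue_eigenvalues hn i))
    _ = ‖A z - s • z‖ ^ 2 := by
        rw [← hA.inner_sub_smul_sub_smul_eq_sum hn, real_inner_self_eq_norm_sq]

theorem gap_mul_abs_rayleigh_sub_le (hA : A.IsSymmetric) {z : E} (hz : ‖z‖ = 1) {l g : ℝ}
    (hg : 0 ≤ g)
    (hclosest : ∀ μ, Module.End.HasEigenvalue A μ → |⟪z, A z⟫ - l| ≤ |⟪z, A z⟫ - μ|)
    (hgap : ∀ μ, Module.End.HasEigenvalue A μ → μ ≠ l → g ≤ |⟪z, A z⟫ - μ|) :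
    g * |⟪z, A z⟫ - l| ≤ ‖A z - ⟪z, A z⟫ • z‖ ^ 2 := by
  have hn : Module.finrank ℝ E = Module.finrank ℝ E := rfl
  set b := hA.eigenvectorBasis hn
  set μ := hA.eigenvalues hn
  have horth := inner_sub_rayleigh_smul_eq_zero A hz
  set ρ := ⟪z, A z⟫
  have hdiff : ρ - l = ∑ i, (μ i - l) * ⟪b i, z⟫ ^ 2 := by
    rw [← hA.inner_sub_smul_eq_sum hn, inner_sub_right, real_inner_smul_right,
      real_inner_self_eq_norm_sq, hz, one_pow, mul_one]
  have hsplit : A z - l • z = (A z - ρ • z) + (ρ - l) • z := by module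
  calc g * |ρ - l| ≤ ∑ i, g * |μ i - l| * ⟪b i, z⟫ ^ 2 := by
        rw [hdiff]
        refine (mul_le_mul_of_nonneg_left (Finset.abs_sum_le_sum_abs _ _) hg).trans_eq ?_
        simp only [Finset.mul_sum, abs_mul, abs_sq, mul_assoc]
    _ ≤ ∑ i, (μ i - ρ) * (μ i - l) * ⟪b i, z⟫ ^ 2 := by
        refine Finset.sum_le_sum fun i _ => mul_le_mul_of_nonneg_right ?_ (sq_nonneg _)
        have hμ := hA.hasEigenvalue_eigenvalues hn i
        by_cases hl : μ i = l
        · simp [hl]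
        · exact gap_mul_abs_sub_le_mul_sub (hclosest _ hμ) (hgap _ hμ hl)
    _ = ⟪A z - ρ • z, A z - l • z⟫ := (hA.inner_sub_smul_sub_smul_eq_sum hn z ρ l).symm
    _ = ‖A z - ρ • z‖ ^ 2 := by
        rw [hsplit, inner_add_right, real_inner_smul_right, real_inner_comm z, horth,
          real_inner_self_eq_norm_sq, mul_zero, add_zero]

end LinearMap.IsSymmetric

end

theorem rayleigh_quotient_eigenvalue_bound_general
    (n : ℕ) (T : Matrix (Fin n) (Fin n) ℝ) (hT : T.IsSymm)
    (zhat : EuclideanSpace ℝ (Fin n)) (hzhat : ‖zhat‖ = 1)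
    (lam lamhat gap : ℝ)
    (hray : lamhat = ⟪zhat, (Matrix.toEuclideanLin T zhat : EuclideanSpace ℝ (Fin n))⟫)
    (hclosest : ∀ μ : ℝ, (∃ v : EuclideanSpace ℝ (Fin n), v ≠ 0 ∧ Matrix.toEuclideanLin T v = μ • v) →
      μ ≠ lam → |lamhat - lam| < |lamhat - μ|)
    (hgap : IsGLB {d : ℝ | ∃ μ : ℝ,
      (∃ v : EuclideanSpace ℝ (Fin n), v ≠ 0 ∧ Matrix.toEuclideanLin T v = μ • v) ∧ μ ≠ lam ∧
        d = |lamhat - μ|} gap)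
    (hgappos : 0 < gap)
    (r : EuclideanSpace ℝ (Fin n)) (hr : r = (Matrix.toEuclideanLin T zhat : EuclideanSpace ℝ (Fin n)) - lamhat • zhat) :
    |lamhat - lam| ≤ min ‖r‖ (‖r‖ ^ 2 / gap) := by
  set A := Matrix.toEuclideanLin T
  have hA : A.IsSymmetric :=
    Matrix.isSymmetric_toEuclideanLin_iff.2 (Matrix.isHermitian_iff_isSymm.2 hT)
  have heigenvector : ∀ μ, Module.End.HasEigenvalue A μ → ∃ v, v ≠ 0 ∧ A v = μ • v :=
    fun μ hμ =>
      let ⟨v, hv⟩ := hμ.exists_hasEigenvector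
      ⟨v, hv.2, hv.apply_eq_smul⟩
  have hnearest : ∀ μ, Module.End.HasEigenvalue A μ → |lamhat - lam| ≤ |lamhat - μ| := by
    intro μ hμ
    rcases eq_or_ne μ lam with rfl | hne
    · rfl
    · exact (hclosest μ (heigenvector μ hμ) hne).le
  have hgap_le : ∀ μ, Module.End.HasEigenvalue A μ → μ ≠ lam → gap ≤ |lamhat - μ| :=
    fun μ hμ hne => hgap.1 ⟨μ, heigenvector μ hμ, hne, rfl⟩
  subst hray hr
  refine le_min ?_ ((le_div_iff₀ hgappos).2 ?_)
  · simpa only [hzhat, mul_one] using hA.mul_norm_le_norm_sub_smul (abs_nonneg _) hnearest zhat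
  · rw [mul_comm]
    exact hA.gap_mul_abs_rayleigh_sub_le hzhat hgappos.le hnearest hgap_le

/-- Gap Theorem, eigenvalue bound for the Rayleigh quotient:
`|λ̂ − λ| ≤ min { ‖r‖, ‖r‖² / gap(λ̂) }`. -/
theorem rayleigh_quotient_eigenvalue_bound
    (n : ℕ) (T : Matrix (Fin n) (Fin n) ℝ) (hT : T.IsSymm)
    (zhat : EuclideanSpace ℝ (Fin n)) (hzhat : ‖zhat‖ = 1)
    (lam lamhat gap : ℝ)
    (hray : lamhat = ⟪zhat, (Matrix.toEuclideanLin T zhat : EuclideanSpace ℝ (Fin n))⟫)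
    (hlam : ∃ v : EuclideanSpace ℝ (Fin n), v ≠ 0 ∧ Matrix.toEuclideanLin T v = lam • v)
    (hclosest : ∀ μ : ℝ, (∃ v : EuclideanSpace ℝ (Fin n), v ≠ 0 ∧ Matrix.toEuclideanLin T v = μ • v) →
      μ ≠ lam → |lamhat - lam| < |lamhat - μ|)
    (hgap : IsGLB {d : ℝ | ∃ μ : ℝ,
      (∃ v : EuclideanSpace ℝ (Fin n), v ≠ 0 ∧ Matrix.toEuclideanLin T v = μ • v) ∧ μ ≠ lam ∧
        d = |lamhat - μ|} gap)
    (hgappos : 0 < gap)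
    (r : EuclideanSpace ℝ (Fin n)) (hr : r = (Matrix.toEuclideanLin T zhat : EuclideanSpace ℝ (Fin n)) - lamhat • zhat) :
    |lamhat - lam| ≤ min ‖r‖ (‖r‖ ^ 2 / gap) :=
  rayleigh_quotient_eigenvalue_bound_general n T hT zhat hzhat lam lamhat gap hray hclosest hgap
    hgappos r hr
end

section
/- Let T be a real symmetric matrix with spectral decomposition having orthonormal eigenvectors z_i and eigenvalues λ_i, and let ẑ be a unit vector, λ the eigenvalue closest to λ̂ := ⟨ẑ,Tẑ⟩ with unit eigenvector z, gap(λ̂) the distance to the rest of the spectrum, and r := Tẑ − λ̂ẑ. If additionally λ is a simple eigenvalue, then the component of ẑ orthogonal to z has norm at most ‖r‖/gap(λ̂): ‖ẑ − ⟨ẑ,z⟩z‖ ≤ ‖r‖/gap(λ̂). -/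
/-!
Put `w := ẑ - ⟪ẑ, z⟫ z`. As `λ` is simple, `w` is orthogonal to the whole `λ`-eigenspace, so in an
orthonormal eigenbasis of `T` the coefficients of `w` live on eigenvalues `μ ≠ λ`, all at distance
at least `gap` from `λ̂`; Parseval gives `gap ‖w‖ ≤ ‖(T - λ̂) w‖`. Since `z` is an eigenvector of the
symmetric `T`, `T - λ̂` commutes with the projection off `z`, so `(T - λ̂) w` is the component of `r`
orthogonal to `z` and has norm at most `‖r‖`.
-/

open scoped RealInnerProductSpace
open Module.End

section

variable {E : Type*} [NormedAddCommGroup E] [InnerProductSpace ℝ E]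

theorem inner_sub_inner_smul_of_norm_eq_one {z : E} (hz : ‖z‖ = 1) (x : E) :
    ⟪z, x - ⟪x, z⟫ • z⟫ = 0 := by
  rw [inner_sub_right, real_inner_smul_right, real_inner_self_eq_norm_sq, hz, real_inner_comm]
  ring

theorem norm_sub_inner_smul_le_of_norm_eq_one {z : E} (hz : ‖z‖ = 1) (x : E) :
    ‖x - ⟪x, z⟫ • z‖ ≤ ‖x‖ := by
  rw [real_inner_comm, ← Submodule.starProjection_unit_singleton ℝ hz,
    ← Submodule.starProjection_orthogonal_val]
  exact Submodule.norm_starProjection_apply_le _ x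

namespace LinearMap.IsSymmetric

variable {T : E →ₗ[ℝ] E}

theorem norm_apply_sub_smul_orthogonal_le (hT : T.IsSymmetric) {z : E} {lam : ℝ} (hz : ‖z‖ = 1)
    (heig : T z = lam • z) (x : E) (s : ℝ) :
    ‖T (x - ⟪x, z⟫ • z) - s • (x - ⟪x, z⟫ • z)‖ ≤ ‖T x - s • x‖ := by
  have hcomm : T (x - ⟪x, z⟫ • z) - s • (x - ⟪x, z⟫ • z) =
      (T x - s • x) - ⟪T x - s • x, z⟫ • z := by
    rw [inner_sub_left, hT, heig, real_inner_smul_left, real_inner_smul_right]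
    simp only [map_sub, map_smul, heig]
    module
  rw [hcomm]
  exact norm_sub_inner_smul_le_of_norm_eq_one hz _

theorem mul_norm_le_norm_apply_sub_smul [FiniteDimensional ℝ E] (hT : T.IsSymmetric)
    {s gap : ℝ} (hgap : 0 ≤ gap) {w : E}
    (hw : ∀ μ v, HasEigenvector T μ v → |μ - s| < gap → ⟪v, w⟫ = 0) :
    gap * ‖w‖ ≤ ‖T w - s • w‖ := by
  let b := hT.eigenvectorBasis rfl
  let μ := hT.eigenvalues rfl
  have hbμ : ∀ i, HasEigenvector T (μ i) (b i) := hT.hasEigenvector_eigenvectorBasis rfl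
  have hcoeff : ∀ i, ⟪b i, T w - s • w⟫ = (μ i - s) * ⟪b i, w⟫ := fun i => by
    rw [inner_sub_right, real_inner_smul_right, ← hT, (hbμ i).apply_eq_smul, real_inner_smul_left]
    ring
  have hterm : ∀ i, gap ^ 2 * ⟪b i, w⟫ ^ 2 ≤ ((μ i - s) * ⟪b i, w⟫) ^ 2 := fun i => by
    rcases lt_or_ge |μ i - s| gap with hnear | hfar
    · simp [hw _ _ (hbμ i) hnear]
    · rw [mul_pow, ← sq_abs (μ i - s)]
      gcongr
  refine (pow_le_pow_iff_left₀ (by positivity) (norm_nonneg _) two_ne_zero).1 ?_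
  calc (gap * ‖w‖) ^ 2 = ∑ i, gap ^ 2 * ⟪b i, w⟫ ^ 2 := by
        rw [mul_pow, ← b.sum_sq_inner_right, Finset.mul_sum]
    _ ≤ ∑ i, ((μ i - s) * ⟪b i, w⟫) ^ 2 := Finset.sum_le_sum fun i _ => hterm i
    _ = ‖T w - s • w‖ ^ 2 := by simp only [← hcoeff, b.sum_sq_inner_right]

end LinearMap.IsSymmetric

end

theorem orthogonal_component_bound_simple_eigenvalue_general
    (n : ℕ) (T : Matrix (Fin n) (Fin n) ℝ) (hT : T.IsSymm)
    (zhat z : EuclideanSpace ℝ (Fin n))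
    (hz : ‖z‖ = 1)
    (lam lamhat gap : ℝ)
    (heig : Matrix.toEuclideanLin T z = lam • z)
    (hsimple : ∀ v : EuclideanSpace ℝ (Fin n), Matrix.toEuclideanLin T v = lam • v → ∃ c : ℝ, v = c • z)
    (hgap : IsGLB {d : ℝ | ∃ μ : ℝ,
      (∃ v : EuclideanSpace ℝ (Fin n), v ≠ 0 ∧ Matrix.toEuclideanLin T v = μ • v) ∧ μ ≠ lam ∧
        d = |lamhat - μ|} gap)
    (hgappos : 0 < gap)
    (r : EuclideanSpace ℝ (Fin n)) (hr : r = (Matrix.toEuclideanLin T zhat : EuclideanSpace ℝ (Fin n)) - lamhat • zhat) :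
    ‖zhat - ⟪zhat, z⟫ • z‖ ≤ ‖r‖ / gap := by
  set A := Matrix.toEuclideanLin T
  have hA : A.IsSymmetric := Matrix.isSymmetric_toEuclideanLin_iff.mpr hT
  have hperp : ∀ μ v, HasEigenvector A μ v → |μ - lamhat| < gap →
      ⟪v, zhat - ⟪zhat, z⟫ • z⟫ = 0 := by
    intro μ v hv hnear
    have hμ : μ = lam := by
      by_contra hne
      have hfar : gap ≤ |lamhat - μ| := hgap.1 ⟨μ, ⟨v, hv.2, hv.apply_eq_smul⟩, hne, rfl⟩
      rw [abs_sub_comm] at hfar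
      exact hfar.not_gt hnear
    obtain ⟨c, rfl⟩ := hsimple v (hμ ▸ hv.apply_eq_smul)
    rw [real_inner_smul_left, inner_sub_inner_smul_of_norm_eq_one hz, mul_zero]
  calc ‖zhat - ⟪zhat, z⟫ • z‖
      ≤ ‖A (zhat - ⟪zhat, z⟫ • z) - lamhat • (zhat - ⟪zhat, z⟫ • z)‖ / gap :=
        (le_div_iff₀' hgappos).2 (hA.mul_norm_le_norm_apply_sub_smul hgappos.le hperp)
    _ ≤ ‖r‖ / gap := by
        rw [hr]
        gcongr
        exact hA.norm_apply_sub_smul_orthogonal_le hz heig zhat lamhat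

/-- For a simple eigenvalue `lam` nearest the Rayleigh quotient `λ̂`, the component
of `ẑ` orthogonal to the eigenvector `z` is bounded by `‖r‖ / gap(λ̂)`. -/
theorem orthogonal_component_bound_simple_eigenvalue
    (n : ℕ) (T : Matrix (Fin n) (Fin n) ℝ) (hT : T.IsSymm)
    (zhat z : EuclideanSpace ℝ (Fin n))
    (hzhat : ‖zhat‖ = 1) (hz : ‖z‖ = 1)
    (lam lamhat gap : ℝ)
    (heig : Matrix.toEuclideanLin T z = lam • z)
    (hsimple : ∀ v : EuclideanSpace ℝ (Fin n), Matrix.toEuclideanLin T v = lam • v → ∃ c : ℝ, v = c • z)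
    (hray : lamhat = ⟪zhat, (Matrix.toEuclideanLin T zhat : EuclideanSpace ℝ (Fin n))⟫)
    (hclosest : ∀ μ : ℝ, (∃ v : EuclideanSpace ℝ (Fin n), v ≠ 0 ∧ Matrix.toEuclideanLin T v = μ • v) →
      μ ≠ lam → |lamhat - lam| < |lamhat - μ|)
    (hgap : IsGLB {d : ℝ | ∃ μ : ℝ,
      (∃ v : EuclideanSpace ℝ (Fin n), v ≠ 0 ∧ Matrix.toEuclideanLin T v = μ • v) ∧ μ ≠ lam ∧
        d = |lamhat - μ|} gap)
    (hgappos : 0 < gap)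
    (r : EuclideanSpace ℝ (Fin n)) (hr : r = (Matrix.toEuclideanLin T zhat : EuclideanSpace ℝ (Fin n)) - lamhat • zhat) :
    ‖zhat - ⟪zhat, z⟫ • z‖ ≤ ‖r‖ / gap :=
  orthogonal_component_bound_simple_eigenvalue_general n T hT zhat z hz lam lamhat gap heig hsimple
    hgap hgappos r hr
end

section
/- Let T be symmetric with unit eigenvector z for eigenvalue λ, and let ẑ be a unit vector with sin∠(ẑ, z) ≤ θ. Then the Rayleigh quotient λ̂ = ⟨ẑ, Tẑ⟩ satisfies |λ̂ − λ| ≤ spdiam(T)·θ², where spdiam(T) = λ_max(T) − λ_min(T). -/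
/-!
Write `ẑ = ⟪ẑ, z⟫ z + w`. Since `T - λ` is symmetric and kills `z`, its quadratic form does not
see the component along `z`: `⟪ẑ, (T - λ) ẑ⟫ = ⟪w, (T - λ) w⟫`, i.e. `λ̂ - λ = ⟪w, T w⟫ - λ ‖w‖²`.
Expanding in an orthonormal eigenbasis puts `⟪w, T w⟫` between `λ_min ‖w‖²` and `λ_max ‖w‖²`,
and `λ` lies in `[λ_min, λ_max]`, so `|λ̂ - λ| ≤ spdiam(T) ‖w‖² ≤ spdiam(T) θ²`.
-/

open scoped RealInnerProductSpace

open Module.End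

namespace LinearMap.IsSymmetric

variable {E : Type*} [NormedAddCommGroup E] [InnerProductSpace ℝ E] {B : E →ₗ[ℝ] E}

theorem inner_map_self_sub_mul_norm_sq_eq_of_apply_eq_smul (hB : B.IsSymmetric) {z : E}
    {lam : ℝ} (hz : B z = lam • z) (x : E) (c : ℝ) :
    ⟪x, B x⟫ - lam * ‖x‖ ^ 2 = ⟪x - c • z, B (x - c • z)⟫ - lam * ‖x - c • z‖ ^ 2 := by
  have hzx : ⟪z, B x⟫ = lam * ⟪x, z⟫ := by
    rw [← hB, hz, real_inner_smul_left, real_inner_comm]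
  simp only [map_sub, map_smul, hz, ← real_inner_self_eq_norm_sq, inner_sub_left, inner_sub_right,
    real_inner_smul_left, real_inner_smul_right, hzx, real_inner_comm z x]
  ring

variable [FiniteDimensional ℝ E]

theorem inner_map_self_eq_sum_eigenvalues (hB : B.IsSymmetric) (v : E) :
    ⟪v, B v⟫ = ∑ i, hB.eigenvalues rfl i * ⟪hB.eigenvectorBasis rfl i, v⟫ ^ 2 := by
  rw [← (hB.eigenvectorBasis rfl).sum_inner_mul_inner]
  refine Finset.sum_congr rfl fun i _ => ?_
  rw [← hB, hB.apply_eigenvectorBasis, real_inner_smul_left, real_inner_comm,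
    RCLike.ofReal_real_eq_id, id_eq]
  ring

theorem mul_norm_sq_le_inner_map_self (hB : B.IsSymmetric) {a : ℝ}
    (ha : ∀ μ, HasEigenvalue B μ → a ≤ μ) (v : E) : a * ‖v‖ ^ 2 ≤ ⟪v, B v⟫ := by
  rw [hB.inner_map_self_eq_sum_eigenvalues, ← (hB.eigenvectorBasis rfl).sum_sq_inner_right,
    Finset.mul_sum]
  gcongr with i
  exact ha _ (hB.hasEigenvalue_eigenvalues rfl i)

theorem inner_map_self_le_mul_norm_sq (hB : B.IsSymmetric) {b : ℝ}
    (hb : ∀ μ, HasEigenvalue B μ → μ ≤ b) (v : E) : ⟪v, B v⟫ ≤ b * ‖v‖ ^ 2 := by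
  rw [hB.inner_map_self_eq_sum_eigenvalues, ← (hB.eigenvectorBasis rfl).sum_sq_inner_right,
    Finset.mul_sum]
  gcongr with i
  exact hb _ (hB.hasEigenvalue_eigenvalues rfl i)

theorem abs_inner_map_self_sub_mul_norm_sq_le (hB : B.IsSymmetric) {a b lam : ℝ}
    (hab : ∀ μ, HasEigenvalue B μ → a ≤ μ ∧ μ ≤ b) (hlam : HasEigenvalue B lam) (v : E) :
    |⟪v, B v⟫ - lam * ‖v‖ ^ 2| ≤ (b - a) * ‖v‖ ^ 2 := by
  have hlo := hB.mul_norm_sq_le_inner_map_self (fun μ hμ => (hab μ hμ).1) v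
  have hhi := hB.inner_map_self_le_mul_norm_sq (fun μ hμ => (hab μ hμ).2) v
  obtain ⟨hal, hlb⟩ := hab lam hlam
  rw [abs_le]
  constructor <;> nlinarith [sq_nonneg ‖v‖]

end LinearMap.IsSymmetric

theorem rayleigh_quotient_quadratic_accuracy_general
    (n : ℕ) (T : Matrix (Fin n) (Fin n) ℝ) (hT : T.IsSymm)
    (z zhat : EuclideanSpace ℝ (Fin n)) (hz : ‖z‖ = 1) (hzhat : ‖zhat‖ = 1)
    (lam lammin lammax θ : ℝ)
    (heig : Matrix.toEuclideanLin T z = lam • z)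
    (hbounds : ∀ μ : ℝ, (∃ v : EuclideanSpace ℝ (Fin n), v ≠ 0 ∧ Matrix.toEuclideanLin T v = μ • v) →
      lammin ≤ μ ∧ μ ≤ lammax)
    (hsin : ‖zhat - ⟪zhat, z⟫ • z‖ ≤ θ)
    (lamhat : ℝ) (hray : lamhat = ⟪zhat, (Matrix.toEuclideanLin T zhat : EuclideanSpace ℝ (Fin n))⟫) :
    |lamhat - lam| ≤ (lammax - lammin) * θ ^ 2 := by
  set B := Matrix.toEuclideanLin T
  have hB : B.IsSymmetric := Matrix.isSymmetric_toEuclideanLin_iff.mpr hT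
  have hspec : ∀ μ, HasEigenvalue B μ → lammin ≤ μ ∧ μ ≤ lammax := fun μ hμ =>
    let ⟨v, hv⟩ := hμ.exists_hasEigenvector
    hbounds μ ⟨v, hv.2, mem_eigenspace_iff.mp hv.1⟩
  have hz0 : z ≠ 0 := norm_ne_zero_iff.mp (by rw [hz]; exact one_ne_zero)
  have hlam : HasEigenvalue B lam :=
    hasEigenvalue_of_hasEigenvector ⟨mem_eigenspace_iff.mpr heig, hz0⟩
  obtain ⟨hlam_ge, hlam_le⟩ := hspec lam hlam
  have hsplit := hB.inner_map_self_sub_mul_norm_sq_eq_of_apply_eq_smul heig zhat ⟪zhat, z⟫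
  rw [hzhat, one_pow, mul_one, ← hray] at hsplit
  calc |lamhat - lam| ≤ (lammax - lammin) * ‖zhat - ⟪zhat, z⟫ • z‖ ^ 2 := by
        rw [hsplit]
        exact hB.abs_inner_map_self_sub_mul_norm_sq_le hspec hlam _
    _ ≤ (lammax - lammin) * θ ^ 2 := by
        gcongr
        linarith

/-- Quadratic accuracy of the Rayleigh quotient: `|λ̂ − λ| ≤ spdiam(T)·θ²`. -/
theorem rayleigh_quotient_quadratic_accuracy
    (n : ℕ) (T : Matrix (Fin n) (Fin n) ℝ) (hT : T.IsSymm)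
    (z zhat : EuclideanSpace ℝ (Fin n)) (hz : ‖z‖ = 1) (hzhat : ‖zhat‖ = 1)
    (lam lammin lammax θ : ℝ) (hθ : 0 ≤ θ)
    (heig : Matrix.toEuclideanLin T z = lam • z)
    (hmin : ∃ v : EuclideanSpace ℝ (Fin n), v ≠ 0 ∧ Matrix.toEuclideanLin T v = lammin • v)
    (hmax : ∃ v : EuclideanSpace ℝ (Fin n), v ≠ 0 ∧ Matrix.toEuclideanLin T v = lammax • v)
    (hbounds : ∀ μ : ℝ, (∃ v : EuclideanSpace ℝ (Fin n), v ≠ 0 ∧ Matrix.toEuclideanLin T v = μ • v) →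
      lammin ≤ μ ∧ μ ≤ lammax)
    (hsin : ‖zhat - ⟪zhat, z⟫ • z‖ ≤ θ)
    (lamhat : ℝ) (hray : lamhat = ⟪zhat, (Matrix.toEuclideanLin T zhat : EuclideanSpace ℝ (Fin n))⟫) :
    |lamhat - lam| ≤ (lammax - lammin) * θ ^ 2 :=
  rayleigh_quotient_quadratic_accuracy_general n T hT z zhat hz hzhat lam lammin lammax θ heig
    hbounds hsin lamhat hray
end
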